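/- Let g = X + X³ + 2X⁵ + 4X⁷ + 5X⁹ + 6X¹¹ + 7X¹³ ∈ ℚ[X]. There is no polynomial (or formal power series) s over ℚ of the form s = X + a₃X³ + a₅X⁵ with a₃, a₅ ∈ ℚ such that the composition g(−s(−X)) agrees with X modulo X¹²; any series t with zero constant term satisfying g(t(X)) ≡ X mod X¹² must have a nonzero coefficient in degree 11. -/

import Mathlib

/-!
The compositional inverse of `g` modulo `X¹²` is `X - X³ + X⁵ - 19 X¹¹`. Since `g'(0) = 1`,
`g(a) - g(b) = (a - b) u` with `u` a unit whenever `a` and `b` have no constant term, so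
`g(t) ≡ X mod X¹²` pins `t` down modulo `X¹²`; in particular its coefficient of `X¹¹` is
`-19`.
The odd polynomial `s = X + a₃X³ + a₅X⁵` satisfies `-s(-X) = s` and has no `X¹¹` term.
-/

open PowerSeries

/-- Composition `g ∘ t` of formal power series (intended for `t` with zero
constant coefficient). -/
noncomputable def PowerSeries.compose (g t : PowerSeries ℚ) : PowerSeries ℚ :=
  PowerSeries.mk fun n =>
    PowerSeries.coeff n (Polynomial.aeval t (PowerSeries.trunc (n + 1) g))

open scoped Polynomial

section AevalPowerSeries

variable {R : Type*} [CommRing R]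

theorem constantCoeff_aeval (p : R[X]) (a : R⟦X⟧) :
    constantCoeff (Polynomial.aeval a p) = Polynomial.aeval (constantCoeff a) p := by
  rw [Polynomial.aeval_def, Polynomial.hom_eval₂]
  rfl

theorem aeval_coe_eq_coe_comp (p q : R[X]) :
    Polynomial.aeval (q : R⟦X⟧) p = (p.comp q : R⟦X⟧) := by
  simpa [Polynomial.comp_eq_aeval] using
    Polynomial.aeval_algHom_apply (Polynomial.coeToPowerSeries.algHom R) q p

/-- The factor is `p'(b) + k (a - b)` from the Taylor expansion of `p` at `b`; its constant
coefficient is `p'(0) = p.coeff 1`. -/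
theorem X_pow_dvd_aeval_coe_sub_X {p q : R[X]} {n : ℕ}
    (h : Polynomial.X ^ n ∣ p.comp q - Polynomial.X) :
    X ^ n ∣ Polynomial.aeval (q : R⟦X⟧) p - X := by
  simpa [aeval_coe_eq_coe_comp] using map_dvd Polynomial.coeToPowerSeries.ringHom h

theorem exists_isUnit_aeval_sub_aeval_eq_mul {p : R[X]} (hp : IsUnit (p.coeff 1))
    {a b : R⟦X⟧} (ha : constantCoeff a = 0) (hb : constantCoeff b = 0) :
    ∃ u, IsUnit u ∧ Polynomial.aeval a p - Polynomial.aeval b p = (a - b) * u := by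
  set f := p.map (algebraMap R R⟦X⟧)
  obtain ⟨k, hk⟩ := f.binomExpansion b (a - b)
  rw [add_sub_cancel] at hk
  refine ⟨f.derivative.eval b + k * (a - b), ?_, ?_⟩
  · rw [isUnit_iff_constantCoeff, map_add, map_mul, map_sub, ha, hb, sub_zero, mul_zero,
      add_zero, Polynomial.derivative_map, Polynomial.eval_map_algebraMap, constantCoeff_aeval,
      hb, ← Polynomial.coeff_zero_eq_aeval_zero, Polynomial.coeff_derivative]
    simpa using hp
  · rw [← Polynomial.eval_map_algebraMap, ← Polynomial.eval_map_algebraMap, hk]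
    ring

theorem X_pow_dvd_sub_of_X_pow_dvd_aeval_sub {p : R[X]} (hp : IsUnit (p.coeff 1))
    {a b : R⟦X⟧} (ha : constantCoeff a = 0) (hb : constantCoeff b = 0) {n : ℕ}
    (h : X ^ n ∣ Polynomial.aeval a p - Polynomial.aeval b p) : X ^ n ∣ a - b := by
  obtain ⟨u, hu, hab⟩ := exists_isUnit_aeval_sub_aeval_eq_mul hp ha hb
  exact hu.dvd_mul_right.mp (hab ▸ h)

end AevalPowerSeries

theorem coeff_compose_eq_coeff_aeval (g : ℚ[X]) {t : ℚ⟦X⟧} (ht : constantCoeff t = 0)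
    (n : ℕ) : coeff n (compose g t) = coeff n (Polynomial.aeval t g) := by
  obtain ⟨q, hq⟩ : Polynomial.X ^ (n + 1) ∣ g - trunc (n + 1) (g : ℚ⟦X⟧) := by
    rw [Polynomial.X_pow_dvd_iff]
    intro d hd
    rw [Polynomial.coeff_sub, coeff_trunc, if_pos hd, Polynomial.coeff_coe, sub_self]
  have htail : X ^ (n + 1) ∣
      Polynomial.aeval t g - Polynomial.aeval t (trunc (n + 1) (g : ℚ⟦X⟧)) := by
    rw [← map_sub, hq, map_mul, map_pow, Polynomial.aeval_X]
    exact dvd_mul_of_dvd_left (pow_dvd_pow_of_dvd (X_dvd_iff.mpr ht) _) _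
  rw [compose, coeff_mk, eq_comm, ← sub_eq_zero, ← map_sub]
  exact X_pow_dvd_iff.mp htail n n.lt_succ_self

noncomputable def gPoly : ℚ[X] :=
  .X + .X ^ 3 + 2 * .X ^ 5 + 4 * .X ^ 7 + 5 * .X ^ 9 + 6 * .X ^ 11 + 7 * .X ^ 13

noncomputable def gInvTrunc : ℚ[X] := .X - .X ^ 3 + .X ^ 5 - 19 * .X ^ 11

theorem coeff_one_gPoly : gPoly.coeff 1 = 1 := by
  simp [gPoly, Polynomial.coeff_X, Polynomial.coeff_X_pow]

theorem X_pow_twelve_dvd_gPoly_comp_gInvTrunc_sub_X :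
    Polynomial.X ^ 12 ∣ gPoly.comp gInvTrunc - Polynomial.X := by
  rw [Polynomial.X_pow_dvd_iff]
  intro d hd
  simp only [gPoly, gInvTrunc, Polynomial.add_comp, Polynomial.mul_comp, Polynomial.pow_comp,
    Polynomial.X_comp, Polynomial.ofNat_comp]
  ring_nf
  interval_cases d <;> simp [Polynomial.coeff_X_pow]

theorem X_pow_twelve_dvd_sub_gInvTrunc {t : ℚ⟦X⟧} (ht : constantCoeff t = 0)
    (hgt : X ^ 12 ∣ Polynomial.aeval t gPoly - X) : X ^ 12 ∣ t - (gInvTrunc : ℚ⟦X⟧) := by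
  have hinv := X_pow_dvd_aeval_coe_sub_X X_pow_twelve_dvd_gPoly_comp_gInvTrunc_sub_X
  refine X_pow_dvd_sub_of_X_pow_dvd_aeval_sub (coeff_one_gPoly ▸ isUnit_one) ht ?_ ?_
  · simp [gInvTrunc]
  · simpa using dvd_sub hgt hinv

theorem coeff_eleven_eq_of_X_pow_twelve_dvd {t : ℚ⟦X⟧} (ht : constantCoeff t = 0)
    (hgt : X ^ 12 ∣ Polynomial.aeval t gPoly - X) : coeff 11 t = -19 := by
  have h := X_pow_dvd_iff.mp (X_pow_twelve_dvd_sub_gInvTrunc ht hgt) 11 (by norm_num)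
  rw [map_sub, sub_eq_zero, Polynomial.coeff_coe] at h
  simpa [gInvTrunc, Polynomial.coeff_X, Polynomial.coeff_X_pow] using h

theorem stmt9 :
    let g : Polynomial ℚ := Polynomial.X + Polynomial.X ^ 3 + 2 * Polynomial.X ^ 5 +
      4 * Polynomial.X ^ 7 + 5 * Polynomial.X ^ 9 + 6 * Polynomial.X ^ 11 +
      7 * Polynomial.X ^ 13
    (¬ ∃ a3 a5 : ℚ,
      let s : Polynomial ℚ := Polynomial.X + Polynomial.C a3 * Polynomial.X ^ 3 +
        Polynomial.C a5 * Polynomial.X ^ 5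
      ∀ n < 12, (g.comp (-(s.comp (-Polynomial.X)))).coeff n = (Polynomial.X : Polynomial ℚ).coeff n) ∧
    (∀ t : PowerSeries ℚ, constantCoeff t = 0 →
      (∀ n < 12, coeff n (PowerSeries.compose (g : PowerSeries ℚ) t) = coeff n (X : PowerSeries ℚ)) →
      coeff 11 t ≠ 0) := by
  intro g
  refine ⟨?_, fun t ht hgt => ?_⟩
  · rintro ⟨a3, a5, hs⟩
    set s : ℚ[X] := .X + .C a3 * .X ^ 3 + .C a5 * .X ^ 5
    have hodd : -(s.comp (-.X)) = s := by
      simp only [s, Polynomial.add_comp, Polynomial.mul_comp, Polynomial.pow_comp,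
        Polynomial.X_comp, Polynomial.C_comp]
      ring
    have hgs : Polynomial.X ^ 12 ∣ gPoly.comp s - .X := by
      refine Polynomial.X_pow_dvd_iff.mpr fun n hn => ?_
      rw [Polynomial.coeff_sub, sub_eq_zero, ← hodd]
      exact hs n hn
    have h11 := coeff_eleven_eq_of_X_pow_twelve_dvd (by simp [s]) (X_pow_dvd_aeval_coe_sub_X hgs)
    rw [Polynomial.coeff_coe] at h11
    simp [s, Polynomial.coeff_X, Polynomial.coeff_X_pow] at h11
  · have hgt' : X ^ 12 ∣ Polynomial.aeval t gPoly - X := X_pow_dvd_iff.mpr fun n hn => by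
      rw [map_sub, ← coeff_compose_eq_coeff_aeval _ ht, sub_eq_zero]
      exact hgt n hn
    rw [coeff_eleven_eq_of_X_pow_twelve_dvd ht hgt']
    norm_num
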